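/- arXiv:2501.15080 — 8 statements merged into one kernel-verified Lean document; each statement's English description precedes it below -/
import Mathlib

section
/- Let K = F_q with q a prime power, S = K[a,b,c,d] with the conjugation action of GL₂(K) (σ sends the matrix of variables X to σ⁻¹Xσ). The polynomials f₁ = a + d, f₂ = ad − bc, and f₃ = a^q d + a d^q − b^q c − b c^q are invariant under this action. -/
open MvPolynomial

/-- The conjugation action of `σ ∈ GL₂(K)` on `S = K[a,b,c,d]`: each variable
`x_{ij}` is sent to the `(i,j)` entry of `σ⁻¹ X σ`, where `X` is the matrix of
variables. Here `a = X (0,0)`, `b = X (0,1)`, `c = X (1,0)`, `d = X (1,1)`. -/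
noncomputable def conjAct {K : Type*} [Field K] (σ : GL (Fin 2) K) :
    MvPolynomial (Fin 2 × Fin 2) K →ₐ[K] MvPolynomial (Fin 2 × Fin 2) K :=
  aeval fun p : Fin 2 × Fin 2 => ∑ k : Fin 2, ∑ l : Fin 2,
    C (((σ⁻¹ : GL (Fin 2) K) : Matrix (Fin 2) (Fin 2) K) p.1 k *
        ((σ : Matrix (Fin 2) (Fin 2) K) l p.2)) * X (k, l)

/-- For `K = F_q`, the polynomials `f₁ = a + d`, `f₂ = ad - bc` and
`f₃ = a^q d + a d^q - b^q c - b c^q` are invariant under the conjugation action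
of `GL₂(K)` on `K[a,b,c,d]`. -/
theorem trace_det_steenrod_invariant (K : Type*) [Field K] [Fintype K] (σ : GL (Fin 2) K) :
    conjAct σ (X (0, 0) + X (1, 1)) = X (0, 0) + X (1, 1) ∧
    conjAct σ (X (0, 0) * X (1, 1) - X (0, 1) * X (1, 0)) =
      X (0, 0) * X (1, 1) - X (0, 1) * X (1, 0) ∧
    conjAct σ (X (0, 0) ^ Fintype.card K * X (1, 1) + X (0, 0) * X (1, 1) ^ Fintype.card K
        - X (0, 1) ^ Fintype.card K * X (1, 0) - X (0, 1) * X (1, 0) ^ Fintype.card K) =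
      X (0, 0) ^ Fintype.card K * X (1, 1) + X (0, 0) * X (1, 1) ^ Fintype.card K
        - X (0, 1) ^ Fintype.card K * X (1, 0) - X (0, 1) * X (1, 0) ^ Fintype.card K := by
  classical
  set R := MvPolynomial (Fin 2 × Fin 2) K with hR
  set q := Fintype.card K with hq
  set A : Matrix (Fin 2) (Fin 2) R :=
    ((σ : Matrix (Fin 2) (Fin 2) K)).map (C : K →+* R) with hA
  set B : Matrix (Fin 2) (Fin 2) R :=
    (((σ⁻¹ : GL (Fin 2) K) : Matrix (Fin 2) (Fin 2) K)).map (C : K →+* R) with hB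
  have hBA : B * A = 1 := by
    rw [hA, hB, ← Matrix.map_mul]
    rw [show ((σ⁻¹ : GL (Fin 2) K) : Matrix (Fin 2) (Fin 2) K) *
        (σ : Matrix (Fin 2) (Fin 2) K) = 1 from σ.inv_mul]
    exact Matrix.map_one _ (map_zero _) (map_one _)
  have hAB : A * B = 1 := by
    rw [hA, hB, ← Matrix.map_mul]
    rw [show (σ : Matrix (Fin 2) (Fin 2) K) *
        ((σ⁻¹ : GL (Fin 2) K) : Matrix (Fin 2) (Fin 2) K) = 1 from σ.mul_inv]
    exact Matrix.map_one _ (map_zero _) (map_one _)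
  set Xm : Matrix (Fin 2) (Fin 2) R := Matrix.of (fun i j => (X (i, j) : R)) with hXm
  set Wm : Matrix (Fin 2) (Fin 2) R := Matrix.of (fun i j => (X (i, j) : R) ^ q) with hWm
  have key : ∀ i j : Fin 2, conjAct σ (X (i, j)) = (B * Xm * A) i j := by
    intro i j
    simp only [conjAct, aeval_X, Matrix.mul_apply, Fin.sum_univ_two, hA, hB, hXm,
      Matrix.map_apply, Matrix.of_apply, map_mul]
    ring
  -- Frobenius facts
  obtain ⟨p, hpchar⟩ := CharP.exists K
  haveI : CharP K p := hpchar
  obtain ⟨n, hp, hcard⟩ := FiniteField.card K p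
  haveI : CharP R p := inferInstance
  haveI : Fact p.Prime := ⟨hp⟩
  haveI : ExpChar R p := ExpChar.prime hp
  have haddq : ∀ x y : R, (x + y) ^ q = x ^ q + y ^ q := by
    intro x y
    rw [hq, hcard]
    exact add_pow_char_pow (R := R) (x := x) (y := y) p n
  have hCq : ∀ c : K, (C c : R) ^ q = C c := by
    intro c
    rw [← map_pow, FiniteField.pow_card]
  have key' : ∀ i j : Fin 2, conjAct σ (X (i, j) ^ q) = (B * Wm * A) i j := by
    intro i j
    rw [map_pow, key]
    simp only [Matrix.mul_apply, Fin.sum_univ_two, hA, hB, hXm, hWm,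
      Matrix.map_apply, Matrix.of_apply]
    simp only [haddq, mul_pow, hCq]
  have hdet : ∀ M : Matrix (Fin 2) (Fin 2) R, (B * M * A).det = M.det := by
    intro M
    rw [Matrix.det_mul, Matrix.det_mul]
    have : B.det * A.det = 1 := by rw [← Matrix.det_mul, hBA, Matrix.det_one]
    calc B.det * M.det * A.det = M.det * (B.det * A.det) := by ring
    _ = M.det := by rw [this, mul_one]
  refine ⟨?_, ?_, ?_⟩
  · -- trace
    rw [map_add, key, key]
    have : (B * Xm * A) 0 0 + (B * Xm * A) 1 1 = (B * Xm * A).trace := by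
      rw [Matrix.trace_fin_two]
    rw [this, Matrix.trace_mul_cycle, hAB, one_mul, Matrix.trace_fin_two]
    rfl
  · -- det
    rw [map_sub, map_mul, map_mul, key, key, key, key]
    have : (B * Xm * A) 0 0 * (B * Xm * A) 1 1 - (B * Xm * A) 0 1 * (B * Xm * A) 1 0
        = (B * Xm * A).det := by rw [Matrix.det_fin_two]
    rw [this, hdet, Matrix.det_fin_two]
    rfl
  · -- steenrod
    rw [map_sub, map_sub, map_add, map_mul, map_mul, map_mul, map_mul,
      key, key, key, key, key', key', key', key']
    have hsum : B * Xm * A + B * Wm * A = B * (Xm + Wm) * A := by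
      rw [Matrix.mul_add, Matrix.add_mul]
    have expand : ∀ Y Z : Matrix (Fin 2) (Fin 2) R,
        Z 0 0 * Y 1 1 + Y 0 0 * Z 1 1 - Z 0 1 * Y 1 0 - Y 0 1 * Z 1 0
          = (Y + Z).det - Y.det - Z.det := by
      intro Y Z
      simp only [Matrix.det_fin_two, Matrix.add_apply]
      ring
    rw [expand, hsum, hdet, hdet, hdet, ← expand]
    simp only [hXm, hWm, Matrix.of_apply]
end

section
/- Let K = F_q, g(x) = x² − τx + δ irreducible over K, and S = K[a,b,c,d]. Define f₁ = a+d, f₂ = ad−bc, f₃ = a^q d + a d^q − b^q c − b c^q, and f₄ = ∏_{A∈K, B∈K×} (Aa + Bb − (g(A)/B)c + (τ−A)d). Then the only common zero of f₁, f₂, f₃, f₄ in (algebraic closure of K)⁴ is the origin; equivalently, f₁, f₂, f₃, f₄ form a homogeneous system of parameters for S. -/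
open MvPolynomial

lemma no_root_of_irred {K : Type*} [Field K] {τ δ : K}
    (hirr : Irreducible (Polynomial.X ^ 2 - Polynomial.C τ * Polynomial.X + Polynomial.C δ))
    (lam : K) : lam ^ 2 - τ * lam + δ ≠ 0 := by
  intro h
  have hroot : (Polynomial.X ^ 2 - Polynomial.C τ * Polynomial.X + Polynomial.C δ).IsRoot lam := by
    simp [Polynomial.IsRoot, h]
  have h1 := Polynomial.degree_eq_one_of_irreducible_of_root hirr hroot
  have hdeg : (Polynomial.X ^ 2 - Polynomial.C τ * Polynomial.X + Polynomial.C δ).degree = 2 := by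
    compute_degree!
  rw [hdeg] at h1
  exact (by norm_num : (2 : WithBot ℕ) ≠ 1) h1

lemma exists_algebraMap_eq {K : Type*} [Field K] [Fintype K] {L : Type*} [Field L] [Algebra K L]
    {x : L} (hx : x ^ Fintype.card K = x) : ∃ t : K, algebraMap K L t = x := by
  classical
  set q := Fintype.card K with hq'
  have hq : 1 < q := Fintype.one_lt_card
  set Q : Polynomial L := Polynomial.X ^ q - Polynomial.X with hQ
  have hQ0 : Q ≠ 0 := FiniteField.X_pow_card_sub_X_ne_zero L hq
  have hroot : x ∈ Q.roots.toFinset := by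
    rw [Multiset.mem_toFinset, Polynomial.mem_roots hQ0]
    simp [hQ, Polynomial.IsRoot, hx]
  have hTsub : (Finset.univ.image (algebraMap K L)) ⊆ Q.roots.toFinset := by
    intro y hy
    obtain ⟨t, _, rfl⟩ := Finset.mem_image.mp hy
    rw [Multiset.mem_toFinset, Polynomial.mem_roots hQ0]
    simp only [hQ, Polynomial.IsRoot, Polynomial.eval_sub, Polynomial.eval_pow, Polynomial.eval_X,
      sub_eq_zero, ← map_pow]
    rw [FiniteField.pow_card]
  have hcardT : (Finset.univ.image (algebraMap K L)).card = q := by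
    rw [Finset.card_image_of_injective _ (algebraMap K L).injective, Finset.card_univ]
  have hcardR : Q.roots.toFinset.card ≤ q := by
    refine le_trans (Multiset.toFinset_card_le _) (le_trans (Polynomial.card_roots' Q) ?_)
    rw [hQ, FiniteField.X_pow_card_sub_X_natDegree_eq L hq]
  have heq := Finset.eq_of_subset_of_card_le hTsub (by rw [hcardT]; exact hcardR)
  rw [← heq] at hroot
  obtain ⟨t, _, ht⟩ := Finset.mem_image.mp hroot
  exact ⟨t, ht⟩

/-- For `K = F_q` and `g(x) = x² - τx + δ` irreducible over `K`, the invariants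
`f₁ = a + d`, `f₂ = ad - bc`, `f₃ = a^q d + a d^q - b^q c - b c^q` and
`f₄ = ∏_{A ∈ K, B ∈ K×} (Aa + Bb - (g(A)/B)c + (τ - A)d)` have the origin as their
only common zero over the algebraic closure of `K`; i.e. they form a homogeneous
system of parameters for `K[a,b,c,d]`. Here `a = X 0`, `b = X 1`, `c = X 2`, `d = X 3`. -/
theorem primary_invariants_hsop (K : Type*) [Field K] [Fintype K] [DecidableEq K] (τ δ : K)
    (hirr : Irreducible (Polynomial.X ^ 2 - Polynomial.C τ * Polynomial.X + Polynomial.C δ))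
    (v : Fin 4 → AlgebraicClosure K)
    (h1 : aeval v (X 0 + X 3 : MvPolynomial (Fin 4) K) = 0)
    (h2 : aeval v (X 0 * X 3 - X 1 * X 2 : MvPolynomial (Fin 4) K) = 0)
    (h3 : aeval v (X 0 ^ Fintype.card K * X 3 + X 0 * X 3 ^ Fintype.card K
        - X 1 ^ Fintype.card K * X 2 - X 1 * X 2 ^ Fintype.card K : MvPolynomial (Fin 4) K) = 0)
    (h4 : aeval v (∏ A : K, ∏ B ∈ Finset.univ.erase (0 : K),
        (C A * X 0 + C B * X 1 - C ((A ^ 2 - τ * A + δ) / B) * X 2 + C (τ - A) * X 3) :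
        MvPolynomial (Fin 4) K) = 0) :
    v = 0 := by
  classical
  set q := Fintype.card K with hqdef
  simp only [map_add, map_sub, map_mul, map_pow, aeval_X] at h1 h2 h3
  have hd : v 3 = -v 0 := eq_neg_of_add_eq_zero_right h1
  simp only [map_prod] at h4
  obtain ⟨A, -, h4'⟩ := Finset.prod_eq_zero_iff.mp h4
  obtain ⟨B, hBmem, hE⟩ := Finset.prod_eq_zero_iff.mp h4'
  have hB : B ≠ 0 := (Finset.mem_erase.mp hBmem).1
  simp only [map_add, map_sub, map_mul, aeval_X, aeval_C] at hE
  obtain ⟨n, hp, hcard⟩ := FiniteField.card K (ringChar K)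
  haveI hfact : Fact (ringChar K).Prime := ⟨hp⟩
  haveI : CharP (AlgebraicClosure K) (ringChar K) :=
    charP_of_injective_algebraMap (algebraMap K (AlgebraicClosure K)).injective (ringChar K)
  have hneg : ∀ x : AlgebraicClosure K, (-x) ^ q = -x ^ q := by
    intro x
    rw [hqdef, hcard, neg_pow, neg_one_pow_char_pow, neg_one_mul]
  have hbc : v 1 * v 2 = -(v 0 * v 0) := by rw [hd] at h2; linear_combination -h2
  have hmain : v 0 = 0 ∧ v 1 = 0 ∧ v 2 = 0 := by
    by_cases hb : v 1 = 0
    · have ha : v 0 = 0 := by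
        have h0 : v 0 * v 0 = 0 := by
          rw [hb, zero_mul] at hbc
          linear_combination hbc
        exact mul_self_eq_zero.mp h0
      refine ⟨ha, hb, ?_⟩
      rw [hb, ha, hd, ha] at hE
      have hg' : algebraMap K (AlgebraicClosure K) ((A ^ 2 - τ * A + δ) / B) ≠ 0 :=
        (map_ne_zero_iff _ (algebraMap K (AlgebraicClosure K)).injective).mpr
          (div_ne_zero (no_root_of_irred hirr A) hB)
      have hz : algebraMap K (AlgebraicClosure K) ((A ^ 2 - τ * A + δ) / B) * v 2 = 0 := by
        linear_combination -hE
      rcases mul_eq_zero.mp hz with h | h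
      · exact absurd h hg'
      · exact h
    · exfalso
      by_cases hc : v 2 = 0
      · have ha : v 0 = 0 := by
          rw [hc, mul_zero] at hbc
          exact mul_self_eq_zero.mp (neg_eq_zero.mp hbc.symm)
        rw [hc, ha, hd, ha] at hE
        have hz : algebraMap K (AlgebraicClosure K) B * v 1 = 0 := by linear_combination hE
        rcases mul_eq_zero.mp hz with h | h
        · exact hB (by simpa using h)
        · exact hb h
      · have ha : v 0 ≠ 0 := by
          intro h0
          rw [h0, mul_zero, neg_zero] at hbc
          rcases mul_eq_zero.mp hbc with h | h
          · exact hb h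
          · exact hc h
        have h3' : v 1 ^ q * v 2 + v 1 * v 2 ^ q = -(v 0 ^ q * v 0 + v 0 * v 0 ^ q) := by
          rw [hd, hneg] at h3
          linear_combination -h3
        have hbcq : v 1 ^ q * v 2 ^ q = -(v 0 ^ q * v 0 ^ q) := by
          rw [← mul_pow, hbc, hneg, mul_pow]
        have key : (v 0 ^ q * v 1 - v 0 * v 1 ^ q) * (v 0 ^ q * v 2 - v 0 * v 2 ^ q) = 0 := by
          linear_combination (v 0 ^ q * v 0 ^ q) * hbc + (v 0 * v 0) * hbcq - (v 0 ^ q * v 0) * h3'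
        rcases mul_eq_zero.mp key with hw | hu
        · have hfrob : (v 1 / v 0) ^ q = v 1 / v 0 := by
            rw [div_pow, div_eq_div_iff (pow_ne_zero _ ha) ha]
            linear_combination -hw
          obtain ⟨t, ht⟩ := exists_algebraMap_eq hfrob
          rw [eq_div_iff ha] at ht
          have ht0 : t ≠ 0 := by
            intro h0; rw [h0, map_zero, zero_mul] at ht; exact hb ht.symm
          have hαt : algebraMap K (AlgebraicClosure K) t ≠ 0 := by simpa using ht0
          have hct : algebraMap K (AlgebraicClosure K) t * v 2 = -(v 0) := by
            apply mul_left_cancel₀ ha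
            linear_combination hbc + v 2 * ht
          have hcv : v 2 = (algebraMap K (AlgebraicClosure K) t)⁻¹ * -(v 0) :=
            (eq_inv_mul_iff_mul_eq₀ hαt).mpr hct
          have hKeq0 : algebraMap K (AlgebraicClosure K)
              (A + B * t + (A ^ 2 - τ * A + δ) / B * t⁻¹ - (τ - A)) * v 0 = 0 := by
            rw [hd, ← ht, hcv] at hE
            simp only [map_add, map_sub, map_mul, map_inv₀]
            linear_combination hE
          have hKeq1 : A + B * t + (A ^ 2 - τ * A + δ) / B * t⁻¹ - (τ - A) = 0 := by
            rcases mul_eq_zero.mp hKeq0 with h | h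
            · exact (map_eq_zero_iff _ (algebraMap K (AlgebraicClosure K)).injective).mp h
            · exact absurd h ha
          refine no_root_of_irred hirr (A + B * t) ?_
          field_simp [hB, ht0] at hKeq1
          linear_combination hKeq1
        · have hfrob : (v 2 / v 0) ^ q = v 2 / v 0 := by
            rw [div_pow, div_eq_div_iff (pow_ne_zero _ ha) ha]
            linear_combination -hu
          obtain ⟨t, ht⟩ := exists_algebraMap_eq hfrob
          rw [eq_div_iff ha] at ht
          have ht0 : t ≠ 0 := by
            intro h0; rw [h0, map_zero, zero_mul] at ht; exact hc ht.symm
          have hαt : algebraMap K (AlgebraicClosure K) t ≠ 0 := by simpa using ht0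
          have hbv' : v 1 * algebraMap K (AlgebraicClosure K) t = -(v 0) := by
            apply mul_right_cancel₀ ha
            linear_combination hbc + v 1 * ht
          have hbv : v 1 = -(v 0) * (algebraMap K (AlgebraicClosure K) t)⁻¹ :=
            (eq_mul_inv_iff_mul_eq₀ hαt).mpr hbv'
          have hKeq0 : algebraMap K (AlgebraicClosure K)
              (A - B * t⁻¹ - (A ^ 2 - τ * A + δ) / B * t - (τ - A)) * v 0 = 0 := by
            rw [hd, hbv, ← ht] at hE
            simp only [map_add, map_sub, map_mul, map_inv₀]
            linear_combination hE
          have hKeq1 : A - B * t⁻¹ - (A ^ 2 - τ * A + δ) / B * t - (τ - A) = 0 := by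
            rcases mul_eq_zero.mp hKeq0 with h | h
            · exact (map_eq_zero_iff _ (algebraMap K (AlgebraicClosure K)).injective).mp h
            · exact absurd h ha
          refine no_root_of_irred hirr (A - B / t) ?_
          field_simp [hB, ht0] at hKeq1 ⊢
          linear_combination -hKeq1
  funext i
  fin_cases i <;> simp [hmain.1, hmain.2.1, hmain.2.2, hd]
end

section
/- Let K = F_q, g(x) = x² − τx + δ irreducible over K. The set Ω of homogeneous linear forms { Aa + Bb − (g(A)/B)c + (τ−A)d : A ∈ K, B ∈ K× } in K[a,b,c,d] is a single orbit of size q² − q under the conjugation action of GL₂(K) on linear forms. -/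
open MvPolynomial

/-- The set of linear forms `Aa + Bb - (g(A)/B)c + (τ - A)d` for `A ∈ K`, `B ∈ K×`,
where `g(x) = x² - τx + δ`. -/
def OmegaSet (K : Type*) [Field K] (τ δ : K) : Set (MvPolynomial (Fin 2 × Fin 2) K) :=
  {p | ∃ A B : K, B ≠ 0 ∧
    p = C A * X (0, 0) + C B * X (0, 1) - C ((A ^ 2 - τ * A + δ) / B) * X (1, 0)
        + C (τ - A) * X (1, 1)}

/-! ### Auxiliary definitions and lemmas -/

/-- The linear form associated to a matrix (transposed coefficients). -/
noncomputable def lf {K : Type*} [Field K] (M : Matrix (Fin 2) (Fin 2) K) :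
    MvPolynomial (Fin 2 × Fin 2) K :=
  ∑ k : Fin 2, ∑ l : Fin 2, C (M l k) * X (k, l)

/-- The matrix corresponding to the linear form `ω_{A,B}`. -/
def omat {K : Type*} [Field K] (τ δ A B : K) : Matrix (Fin 2) (Fin 2) K :=
  !![A, -((A ^ 2 - τ * A + δ) / B); B, τ - A]

lemma coeff_lf {K : Type*} [Field K] (M : Matrix (Fin 2) (Fin 2) K) (k l : Fin 2) :
    coeff (Finsupp.single (k, l) 1) (lf M) = M l k := by
  fin_cases k <;> fin_cases l <;>
    simp [lf, Fin.sum_univ_two, coeff_X', Finsupp.single_eq_single_iff, Prod.ext_iff]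

lemma lf_injective {K : Type*} [Field K] : Function.Injective (lf (K := K)) := by
  intro M N h
  ext i j
  rw [← coeff_lf M j i, ← coeff_lf N j i, h]

lemma conjAct_lf {K : Type*} [Field K] (σ : GL (Fin 2) K) (M : Matrix (Fin 2) (Fin 2) K) :
    conjAct σ (lf M) =
      lf ((σ : Matrix (Fin 2) (Fin 2) K) * M *
        ((σ⁻¹ : GL (Fin 2) K) : Matrix (Fin 2) (Fin 2) K)) := by
  simp only [conjAct, lf, map_sum, map_add, map_mul, aeval_C, aeval_X, algebraMap_eq,
    Matrix.mul_apply, Fin.sum_univ_two, C_add, C_mul]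
  ring

lemma omega_eq_lf {K : Type*} [Field K] (τ δ A B : K) :
    C A * X (0, 0) + C B * X (0, 1) - C ((A ^ 2 - τ * A + δ) / B) * X (1, 0)
        + C (τ - A) * X (1, 1) = lf (omat τ δ A B) := by
  simp [lf, omat, Fin.sum_univ_two]
  ring

lemma trace_omat {K : Type*} [Field K] (τ δ A B : K) : (omat τ δ A B).trace = τ := by
  simp [omat, Matrix.trace_fin_two]

lemma det_omat {K : Type*} [Field K] (τ δ A B : K) (hB : B ≠ 0) :
    (omat τ δ A B).det = δ := by
  simp only [omat, Matrix.det_fin_two_of]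
  field_simp
  ring

lemma no_root {K : Type*} [Field K] {τ δ : K}
    (hirr : Irreducible (Polynomial.X ^ 2 - Polynomial.C τ * Polynomial.X + Polynomial.C δ))
    (r : K) : r ^ 2 - τ * r + δ ≠ 0 := by
  intro hr
  set P : Polynomial K := Polynomial.X ^ 2 - Polynomial.C τ * Polynomial.X + Polynomial.C δ
    with hP
  have hroot : P.IsRoot r := by simp [hP, Polynomial.IsRoot, hr]
  obtain ⟨s, hs⟩ := (Polynomial.dvd_iff_isRoot).2 hroot
  have hdeg : P.natDegree = 2 := by
    rw [hP]
    compute_degree!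
  rcases hirr.isUnit_or_isUnit hs with hu | hu
  · exact Polynomial.not_isUnit_X_sub_C r hu
  · have hs0 : s ≠ 0 := by
      intro h0; rw [h0, mul_zero] at hs
      rw [hs] at hdeg; simp at hdeg
    have : P.natDegree = 1 := by
      rw [hs, Polynomial.natDegree_mul (Polynomial.X_sub_C_ne_zero r) hs0,
        Polynomial.natDegree_X_sub_C, Polynomial.natDegree_eq_zero_of_isUnit hu]
    omega

lemma eq_omat {K : Type*} [Field K] {τ δ : K} (N : Matrix (Fin 2) (Fin 2) K)
    (ht' : N 0 0 + N 1 1 = τ) (hd' : N 0 0 * N 1 1 - N 0 1 * N 1 0 = δ)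
    (hB : N 1 0 ≠ 0) : N = omat τ δ (N 0 0) (N 1 0) := by
  ext i j
  fin_cases i <;> fin_cases j <;> simp [omat]
  · field_simp
    linear_combination -hd' + N 0 0 * ht'
  · linear_combination ht'

lemma lf_mem_omega {K : Type*} [Field K] {τ δ : K}
    (hirr : Irreducible (Polynomial.X ^ 2 - Polynomial.C τ * Polynomial.X + Polynomial.C δ))
    (N : Matrix (Fin 2) (Fin 2) K) (ht : N.trace = τ) (hd : N.det = δ) :
    lf N ∈ OmegaSet K τ δ := by
  have ht' : N 0 0 + N 1 1 = τ := by rw [← ht, Matrix.trace_fin_two]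
  have hd' : N 0 0 * N 1 1 - N 0 1 * N 1 0 = δ := by rw [← hd, Matrix.det_fin_two]
  have hB : N 1 0 ≠ 0 := by
    intro h0
    apply no_root hirr (N 0 0)
    have h11 : N 1 1 = τ - N 0 0 := by linear_combination ht'
    rw [h0, mul_zero, sub_zero, h11] at hd'
    linear_combination -hd'
  refine ⟨N 0 0, N 1 0, hB, ?_⟩
  rw [omega_eq_lf, ← eq_omat N ht' hd' hB]

/-- The explicit conjugating matrix. -/
def Tmat {K : Type*} [Field K] (A B : K) : Matrix (Fin 2) (Fin 2) K := !![1, A; 0, B]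

lemma det_Tmat {K : Type*} [Field K] (A B : K) : (Tmat A B).det = B := by
  simp [Tmat, Matrix.det_fin_two_of]

/-- `Tmat A B` as an element of `GL₂`. -/
noncomputable def Tgl {K : Type*} [Field K] (A B : K) (hB : B ≠ 0) : GL (Fin 2) K :=
  Matrix.GeneralLinearGroup.mkOfDetNeZero (Tmat A B) (by rw [det_Tmat]; exact hB)

lemma Tgl_coe {K : Type*} [Field K] (A B : K) (hB : B ≠ 0) :
    ((Tgl A B hB : GL (Fin 2) K) : Matrix (Fin 2) (Fin 2) K) = Tmat A B := rfl

lemma Tmat_conj {K : Type*} [Field K] (τ δ A B : K) (hB : B ≠ 0) :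
    Tmat A B * omat τ δ 0 1 = omat τ δ A B * Tmat A B := by
  ext i j
  fin_cases i <;> fin_cases j <;>
      simp only [Tmat, omat, Matrix.mul_apply, Fin.sum_univ_two, Matrix.cons_val',
        Matrix.cons_val_zero, Matrix.cons_val_one, Matrix.head_cons, Matrix.empty_val',
        Matrix.cons_val_fin_one, Matrix.head_fin_const, Matrix.of_apply, Fin.zero_eta, Fin.mk_one] <;>
    field_simp <;> ring

lemma omat_conj {K : Type*} [Field K] (τ δ A B : K) (hB : B ≠ 0) :
    omat τ δ A B =
      ((Tgl A B hB : GL (Fin 2) K) : Matrix (Fin 2) (Fin 2) K) * omat τ δ 0 1 *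
        (((Tgl A B hB)⁻¹ : GL (Fin 2) K) : Matrix (Fin 2) (Fin 2) K) := by
  rw [Tgl_coe, Tmat_conj τ δ A B hB, mul_assoc]
  have h1 : Tmat A B * (((Tgl A B hB)⁻¹ : GL (Fin 2) K) : Matrix (Fin 2) (Fin 2) K) = 1 := by
    rw [← Tgl_coe A B hB]
    exact (Tgl A B hB).mul_inv
  rw [h1, mul_one]

/-- For `K = F_q` and `g(x) = x² - τx + δ` irreducible, the set `Ω` of linear forms
`Aa + Bb - (g(A)/B)c + (τ - A)d` is a single orbit of size `q² - q` for the
conjugation action of `GL₂(K)`. -/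
theorem omega_single_orbit (K : Type*) [Field K] [Fintype K] (τ δ : K)
    (hirr : Irreducible (Polynomial.X ^ 2 - Polynomial.C τ * Polynomial.X + Polynomial.C δ)) :
    (∀ ω ∈ OmegaSet K τ δ,
      OmegaSet K τ δ = {p | ∃ σ : GL (Fin 2) K, p = conjAct σ ω}) ∧
    Nat.card (OmegaSet K τ δ) = Fintype.card K ^ 2 - Fintype.card K := by
  constructor
  · rintro ω ⟨A, B, hB, rfl⟩
    rw [omega_eq_lf]
    ext p
    constructor
    · rintro ⟨A', B', hB', rfl⟩
      rw [omega_eq_lf]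
      set U := Tgl A' B' hB'
      set V := Tgl A B hB
      refine ⟨U * V⁻¹, ?_⟩
      rw [conjAct_lf]
      congr 1
      rw [omat_conj τ δ A B hB, omat_conj τ δ A' B' hB']
      simp only [U, V, Units.val_mul, mul_inv_rev, inv_inv, mul_assoc,
        Units.inv_mul_cancel_left, Units.mul_inv_cancel_left]
    · rintro ⟨σ, rfl⟩
      rw [conjAct_lf]
      apply lf_mem_omega hirr
      · rw [Matrix.trace_mul_cycle]
        have h0 : ((σ⁻¹ : GL (Fin 2) K) : Matrix (Fin 2) (Fin 2) K) *
            (σ : Matrix (Fin 2) (Fin 2) K) = 1 := σ.inv_mul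
        rw [h0, one_mul]
        exact trace_omat τ δ A B
      · rw [Matrix.det_mul, Matrix.det_mul]
        have h1 : ((σ : Matrix (Fin 2) (Fin 2) K)).det *
            (((σ⁻¹ : GL (Fin 2) K) : Matrix (Fin 2) (Fin 2) K)).det = 1 := by
          rw [← Matrix.det_mul, σ.mul_inv, Matrix.det_one]
        calc ((σ : Matrix (Fin 2) (Fin 2) K)).det * (omat τ δ A B).det *
              (((σ⁻¹ : GL (Fin 2) K) : Matrix (Fin 2) (Fin 2) K)).det
            = (omat τ δ A B).det * (((σ : Matrix (Fin 2) (Fin 2) K)).det *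
              (((σ⁻¹ : GL (Fin 2) K) : Matrix (Fin 2) (Fin 2) K)).det) := by ring
          _ = (omat τ δ A B).det := by rw [h1, mul_one]
          _ = δ := det_omat τ δ A B hB
  · have hbij : Nat.card (OmegaSet K τ δ) = Nat.card (K × Kˣ) := by
      refine (Nat.card_eq_of_bijective
        (fun x : K × Kˣ => (⟨lf (omat τ δ x.1 x.2),
          ⟨x.1, x.2, x.2.ne_zero, (omega_eq_lf τ δ x.1 x.2).symm ▸ rfl⟩⟩ : OmegaSet K τ δ))
        ⟨?_, ?_⟩).symm
      · rintro ⟨A, B⟩ ⟨A', B'⟩ h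
        have h2 : omat τ δ A (B : K) = omat τ δ A' (B' : K) :=
          lf_injective (Subtype.ext_iff.1 h)
        have hA : A = A' := by
          have := congrFun (congrFun h2 0) 0; simpa [omat] using this
        have hBv : (B : K) = (B' : K) := by
          have := congrFun (congrFun h2 1) 0; simpa [omat] using this
        exact Prod.ext hA (Units.ext hBv)
      · rintro ⟨p, A, B, hB, rfl⟩
        exact ⟨(A, Units.mk0 B hB), Subtype.ext (omega_eq_lf τ δ A B).symm⟩
    rw [hbij, Nat.card_prod, Nat.card_units, Nat.card_eq_fintype_card, sq, Nat.mul_sub, mul_one]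
end

section
/- Let K = F_q with q odd, and g(x) = x² + δ irreducible over K. Write K× = P ⊔ (−P) with |P| = (q−1)/2. Define for A ∈ K, B ∈ K× the linear form λ(A,B) = Aa + Bb − ((A²+δ)/B)c − Ad in K[a,b,c,d], and f₄ = −∏_{A∈K,B∈K×} λ(A,B). Then f = ∏_{A∈K,B∈P} λ(A,B) satisfies f² = (−1)^{(q+1)/2} f₄; in particular f₄ is, up to a sign achievable by scaling, a perfect square in K[a,b,c,d]. -/
open MvPolynomial

/-- Let `K = F_q` with `q` odd, `g(x) = x² + δ` irreducible, and write
`K× = P ⊔ (-P)`. With `λ(A,B) = Aa + Bb - ((A² + δ)/B)c - Ad` and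
`f₄ = -∏_{A ∈ K, B ∈ K×} λ(A,B)`, the polynomial `f = ∏_{A ∈ K, B ∈ P} λ(A,B)`
satisfies `f² = (-1)^((q+1)/2) f₄`; in particular `f₄` is a perfect square in
`K[a,b,c,d]` (after scaling by a square root of `-1` if needed). Here
`a = X 0`, `b = X 1`, `c = X 2`, `d = X 3`. -/
theorem f4_is_square_SL (K : Type*) [Field K] [Fintype K] [DecidableEq K]
    (hodd : Odd (Fintype.card K)) (δ : K)
    (hirr : Irreducible (Polynomial.X ^ 2 + Polynomial.C δ))
    (P : Finset K) (h0 : (0 : K) ∉ P)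
    (hP : ∀ x : K, x ≠ 0 → (x ∈ P ↔ -x ∉ P))
    (hcard : P.card = (Fintype.card K - 1) / 2) :
    (∏ A : K, ∏ B ∈ P,
        (C A * X 0 + C B * X 1 - C ((A ^ 2 + δ) / B) * X 2 - C A * X 3
          : MvPolynomial (Fin 4) K)) ^ 2 =
      C ((-1 : K) ^ ((Fintype.card K + 1) / 2)) *
        (- ∏ A : K, ∏ B ∈ Finset.univ.erase (0 : K),
          (C A * X 0 + C B * X 1 - C ((A ^ 2 + δ) / B) * X 2 - C A * X 3)) ∧
    ∃ f : MvPolynomial (Fin 4) K,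
      f ^ 2 = - ∏ A : K, ∏ B ∈ Finset.univ.erase (0 : K),
          (C A * X 0 + C B * X 1 - C ((A ^ 2 + δ) / B) * X 2 - C A * X 3) := by
  obtain ⟨k, hk⟩ := hodd
  set L : K → K → MvPolynomial (Fin 4) K :=
    fun A B => C A * X 0 + C B * X 1 - C ((A ^ 2 + δ) / B) * X 2 - C A * X 3 with hL
  set f : MvPolynomial (Fin 4) K := ∏ A : K, ∏ B ∈ P, L A B with hf
  have hkcard : P.card = k := by omega
  -- λ(-A,-B) = -λ(A,B)
  have hneg : ∀ A B : K, L (-A) (-B) = - L A B := by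
    intro A B
    have hdiv : ((-A) ^ 2 + δ) / (-B) = -((A ^ 2 + δ) / B) := by
      rw [neg_sq, div_neg]
    simp only [hL, hdiv, map_neg]
    ring
  -- erase 0 = P ∪ (-P), disjointly
  have hdisj : Disjoint P (P.image (fun x => -x)) := by
    rw [Finset.disjoint_left]
    intro x hx hx'
    obtain ⟨y, hy, hyx⟩ := Finset.mem_image.1 hx'
    have hx0 : x ≠ 0 := fun h => h0 (h ▸ hx)
    exact ((hP x hx0).1 hx) (by rw [← hyx, neg_neg]; exact hy)
  have hsplit : (Finset.univ.erase (0 : K)) = P ∪ P.image (fun x => -x) := by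
    ext x
    simp only [Finset.mem_erase, Finset.mem_univ, and_true, Finset.mem_union,
      Finset.mem_image]
    constructor
    · intro hx
      by_cases h : x ∈ P
      · exact Or.inl h
      · refine Or.inr ⟨-x, ?_, neg_neg x⟩
        by_contra h'
        exact h ((hP x hx).2 h')
    · rintro (h | ⟨y, hy, rfl⟩)
      · exact fun h' => h0 (h' ▸ h)
      · intro hy0
        exact h0 (by rwa [neg_eq_zero.1 hy0] at hy)
  have hprodB : ∀ A : K, ∏ B ∈ Finset.univ.erase (0 : K), L A B =
      (∏ B ∈ P, L A B) * ∏ B ∈ P, L A (-B) := by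
    intro A
    rw [hsplit, Finset.prod_union hdisj,
      Finset.prod_image (fun x _ y _ h => neg_injective h)]
  -- reindex A ↦ -A
  have hre : (∏ A : K, ∏ B ∈ P, L A (-B)) = ∏ A : K, ∏ B ∈ P, L (-A) (-B) :=
    (Fintype.prod_equiv (Equiv.neg K) _ _ (fun A => rfl)).symm
  have hinner : ∀ A : K, (∏ B ∈ P, L (-A) (-B)) = (-1) ^ k * ∏ B ∈ P, L A B := by
    intro A
    calc ∏ B ∈ P, L (-A) (-B) = ∏ B ∈ P, (-1) * L A B := by
          refine Finset.prod_congr rfl fun B _ => ?_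
          rw [hneg, neg_one_mul]
      _ = (-1) ^ k * ∏ B ∈ P, L A B := by
          rw [Finset.prod_mul_distrib, Finset.prod_const, hkcard]
  have key : (∏ A : K, ∏ B ∈ Finset.univ.erase (0 : K), L A B) =
      (-1) ^ (k * (2 * k + 1)) * f ^ 2 := by
    calc (∏ A : K, ∏ B ∈ Finset.univ.erase (0 : K), L A B)
        = ∏ A : K, ((∏ B ∈ P, L A B) * ∏ B ∈ P, L A (-B)) :=
          Finset.prod_congr rfl fun A _ => hprodB A
      _ = f * ∏ A : K, ∏ B ∈ P, L A (-B) := by rw [Finset.prod_mul_distrib]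
      _ = f * ∏ A : K, ((-1) ^ k * ∏ B ∈ P, L A B) := by
          rw [hre]; exact congrArg _ (Finset.prod_congr rfl fun A _ => hinner A)
      _ = f * (((-1) ^ k) ^ Fintype.card K * f) := by
          rw [Finset.prod_mul_distrib, Finset.prod_const, Finset.card_univ]
      _ = (-1) ^ (k * (2 * k + 1)) * f ^ 2 := by
          rw [hk, ← pow_mul]; ring
  have hexp : (Fintype.card K + 1) / 2 = k + 1 := by omega
  have hC : (C ((-1 : K) ^ (k + 1)) : MvPolynomial (Fin 4) K) = (-1) ^ (k + 1) := by
    rw [map_pow, map_neg, map_one]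
  have main : f ^ 2 =
      C ((-1 : K) ^ ((Fintype.card K + 1) / 2)) *
        (- ∏ A : K, ∏ B ∈ Finset.univ.erase (0 : K), L A B) := by
    rw [hexp, key, hC]
    have : ((-1 : MvPolynomial (Fin 4) K)) ^ (k + 1) *
        (-((-1) ^ (k * (2 * k + 1)) * f ^ 2)) =
        (-1) ^ ((k + 1) + (k * (2 * k + 1) + 1)) * f ^ 2 := by
      ring
    rw [this, Even.neg_one_pow ⟨k * k + k + 1, by ring⟩, one_mul]
  refine ⟨main, ?_⟩
  rcases Nat.even_or_odd k with hke | hko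
  · -- k even: need √(-1); card K % 4 = 1
    obtain ⟨m, hm⟩ := hke
    have hsq : IsSquare (-1 : K) := FiniteField.isSquare_neg_one_iff.2 (by omega)
    obtain ⟨s, hs⟩ := hsq
    refine ⟨C s * f, ?_⟩
    have : (C s * f) ^ 2 = C (s * s) * f ^ 2 := by rw [map_mul]; ring
    rw [this, ← hs, main, hexp, hC]
    rw [Odd.neg_one_pow ⟨m, by omega⟩, map_neg, map_one]
    simp only [hL]
    ring
  · -- k odd: sign is +1
    refine ⟨f, ?_⟩
    obtain ⟨m, hm⟩ := hko
    rw [main, hexp, hC, Even.neg_one_pow ⟨m + 1, by omega⟩, one_mul]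
end

section
/- Let K = F_q with q even and g(x) = x² − τx + δ irreducible over K (so τ ≠ 0). In the polynomial ring T = K[a,b,c], the product ∏_{A∈K, B∈K×} (τa + Bb + (g(A)/B)c) is a perfect square in T. -/
open MvPolynomial

lemma prod_involution_sq {α M : Type*} [DecidableEq α] [CommMonoid M] (σ : α → α)
    (f : α → M) :
    ∀ s : Finset α, (∀ a ∈ s, σ a ∈ s) → (∀ a ∈ s, σ (σ a) = a) →
      (∀ a ∈ s, σ a ≠ a) → (∀ a ∈ s, f (σ a) = f a) →
      ∃ m, ∏ x ∈ s, f x = m ^ 2 := by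
  intro s
  induction s using Finset.strongInduction with
  | _ s ih =>
    intro hmem hinv hfix hf
    rcases s.eq_empty_or_nonempty with rfl | ⟨a, ha⟩
    · exact ⟨1, by simp⟩
    · have hsa : σ a ∈ s := hmem a ha
      have hne : σ a ≠ a := hfix a ha
      set t := (s.erase a).erase (σ a) with ht
      have hts : t ⊂ s := by
        refine Finset.ssubset_of_subset_of_ssubset ?_ (Finset.erase_ssubset ha)
        exact Finset.erase_subset _ _
      have htmem : ∀ x ∈ t, x ∈ s := fun x hx => hts.1 hx
      have htx : ∀ x ∈ t, x ≠ a ∧ x ≠ σ a := by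
        intro x hx
        rw [ht] at hx
        exact ⟨Finset.ne_of_mem_erase (Finset.mem_of_mem_erase hx),
          Finset.ne_of_mem_erase hx⟩
      have hσt : ∀ x ∈ t, σ x ∈ t := by
        intro x hx
        have hxs := htmem x hx
        have ⟨hx1, hx2⟩ := htx x hx
        rw [ht]
        refine Finset.mem_erase.2 ⟨?_, Finset.mem_erase.2 ⟨?_, hmem x hxs⟩⟩
        · intro h
          apply hx1
          have := congrArg σ h
          rwa [hinv x hxs, hinv a ha] at this
        · intro h
          apply hx2
          have := congrArg σ h
          rwa [hinv x hxs] at this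
      obtain ⟨m, hm⟩ := ih t hts hσt (fun x hx => hinv x (htmem x hx))
        (fun x hx => hfix x (htmem x hx)) (fun x hx => hf x (htmem x hx))
      refine ⟨f a * m, ?_⟩
      have hsplit : s = insert a (insert (σ a) t) := by
        rw [ht, Finset.insert_erase, Finset.insert_erase ha]
        exact Finset.mem_erase.2 ⟨hne, hsa⟩
      have h2 : σ a ∉ t := fun h => (htx (σ a) h).2 rfl
      have h1 : a ∉ insert (σ a) t := by
        rw [Finset.mem_insert]
        rintro (h | h)
        · exact hne h.symm
        · exact (htx a h).1 rfl
      rw [hsplit, Finset.prod_insert h1, Finset.prod_insert h2, hm, hf a ha,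
        ← mul_assoc, ← sq, mul_pow]

/-- Let `K = F_q` with `q` even and `g(x) = x² - τx + δ` irreducible over `K`.
In `T = K[a,b,c]` (with `a = X 0`, `b = X 1`, `c = X 2`), the product
`∏_{A ∈ K, B ∈ K×} (τa + Bb + (g(A)/B)c)` is a perfect square. -/
theorem pi_f4_is_square_char_two (K : Type*) [Field K] [Fintype K] [DecidableEq K]
    [CharP K 2] (τ δ : K)
    (hirr : Irreducible (Polynomial.X ^ 2 - Polynomial.C τ * Polynomial.X + Polynomial.C δ)) :
    ∃ f : MvPolynomial (Fin 3) K,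
      (∏ A : K, ∏ B ∈ Finset.univ.erase (0 : K),
        (C τ * X 0 + C B * X 1 + C ((A ^ 2 - τ * A + δ) / B) * X 2)) = f ^ 2 := by
  have h2K : (2 : K) = 0 := CharP.cast_eq_zero K 2
  -- τ ≠ 0
  have htau : τ ≠ 0 := by
    rintro rfl
    obtain ⟨s, hs⟩ := FiniteField.isSquare_of_char_two (by
      rw [ringChar.eq_iff]; infer_instance) δ
    have h2P : (2 : Polynomial K) = 0 := by
      have := CharP.cast_eq_zero (Polynomial K) 2
      exact_mod_cast this
    have key : (Polynomial.X + Polynomial.C s) ^ 2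
        = Polynomial.X ^ 2 - Polynomial.C (0 : K) * Polynomial.X + Polynomial.C δ := by
      rw [hs, Polynomial.C_mul, map_zero]
      linear_combination (Polynomial.X : Polynomial K) * Polynomial.C s * h2P
    exact hirr.not_isSquare ⟨Polynomial.X + Polynomial.C s, by rw [← key, sq]⟩
  apply prod_involution_sq (fun A => τ - A) _ Finset.univ
  · intro a _; exact Finset.mem_univ _
  · intro a _; ring
  · intro a _
    intro h
    apply htau
    have : τ = 2 * a := by rw [two_mul]; linear_combination h
    rw [this, h2K, zero_mul]
  · intro a _
    apply Finset.prod_congr rfl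
    intro B _
    congr 2
    congr 1
    ring
end

section
/- Let K = F_q with q = 2^{e+1}. Consider the action of O₂(K) on T = K[a, b, d] where the element φ(t) = [[1−t, t],[t, 1−t]] acts by fixing a+d and sending b ↦ b + (t − t²)(a + d) (conjugation on symmetric matrices [[a,b],[b,d]]). Then the polynomial f₃ = Σ_{k=0}^{e} b^{2^k} (a+d)^{2^e − 2^k} is invariant under this action. -/
open MvPolynomial

/-- The action of `φ(t) = [[1-t, t], [t, 1-t]] ∈ O₂(K)` (char 2) on
`T = K[a, b, d]` coming from conjugation on symmetric matrices `[[a, b], [b, d]]`: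
here `a = X 0`, `b = X 1`, `d = X 2`, and `a ↦ (1-t)²a + t²d`,
`b ↦ b + (t - t²)(a + d)`, `d ↦ t²a + (1-t)²d`; in particular `a + d` is fixed. -/
noncomputable def phiAct {K : Type*} [Field K] (t : K) :
    MvPolynomial (Fin 3) K →ₐ[K] MvPolynomial (Fin 3) K :=
  aeval ![C ((1 - t) ^ 2) * X 0 + C (t ^ 2) * X 2,
          C (t - t ^ 2) * (X 0 + X 2) + X 1,
          C (t ^ 2) * X 0 + C ((1 - t) ^ 2) * X 2]

/-- For `K = F_q` with `q = 2^(e+1)`, the polynomial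
`f₃ = Σ_{k=0}^{e} b^(2^k) (a + d)^(2^e - 2^k)` is invariant under the action of
`O₂(K)` on `K[a, b, d]` by conjugation on symmetric matrices. -/
theorem f3_invariant_orthogonal_char_two (K : Type*) [Field K] [Fintype K]
    (e : ℕ) (hq : Fintype.card K = 2 ^ (e + 1)) (t : K) :
    phiAct t (∑ k ∈ Finset.range (e + 1),
        X 1 ^ (2 ^ k) * (X 0 + X 2) ^ (2 ^ e - 2 ^ k) : MvPolynomial (Fin 3) K) =
      ∑ k ∈ Finset.range (e + 1), X 1 ^ (2 ^ k) * (X 0 + X 2) ^ (2 ^ e - 2 ^ k) := by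
  -- the characteristic of `K` is 2
  haveI hchar : CharP K 2 := by
    obtain ⟨p, hc⟩ := CharP.exists K
    haveI := hc
    obtain ⟨n, hp, hcard⟩ := FiniteField.card K p
    have hdvd : p ∣ 2 ^ (e + 1) := hq ▸ hcard ▸ dvd_pow_self p n.pos.ne'
    have hp2 : p = 2 :=
      (Nat.prime_dvd_prime_iff_eq hp Nat.prime_two).mp (hp.dvd_of_dvd_pow hdvd)
    exact hp2 ▸ hc
  haveI : Fact (Nat.Prime 2) := ⟨Nat.prime_two⟩
  have h2 : (2 : K) = 0 := by exact_mod_cast CharP.cast_eq_zero K 2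
  set s : K := t - t ^ 2 with hs
  -- the image of `b = X 1`
  have hb : phiAct t (X 1 : MvPolynomial (Fin 3) K) = C s * (X 0 + X 2) + X 1 := by
    rw [hs]
    simp only [phiAct, aeval_X, Matrix.cons_val_one, Matrix.head_cons, Matrix.cons_val_zero]
  -- `a + d` is fixed
  have hS : phiAct t (X 0 + X 2 : MvPolynomial (Fin 3) K) = X 0 + X 2 := by
    have h1 : (1 - t) ^ 2 + t ^ 2 = (1 : K) := by linear_combination (t ^ 2 - t) * h2
    simp only [phiAct, map_add, aeval_X]
    simp only [Matrix.cons_val_zero, Matrix.cons_val_two, Matrix.tail_cons,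
      Matrix.head_cons]
    rw [show C ((1 - t) ^ 2) * X 0 + C (t ^ 2) * X 2 +
        (C (t ^ 2) * X 0 + C ((1 - t) ^ 2) * X 2) =
        C ((1 - t) ^ 2 + t ^ 2) * (X 0 + X 2 : MvPolynomial (Fin 3) K) by
        rw [map_add]; ring]
    rw [h1, map_one, one_mul]
  -- the telescoping sum vanishes
  have hsum : ∑ k ∈ Finset.range (e + 1), s ^ 2 ^ k = 0 := by
    have hterm : ∀ k, s ^ 2 ^ k = t ^ 2 ^ k - t ^ 2 ^ (k + 1) := by
      intro k
      rw [hs, sub_pow_char_pow, ← pow_mul, pow_succ, Nat.mul_comm]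
    simp_rw [hterm]
    rw [Finset.sum_range_sub' (fun k => t ^ 2 ^ k)]
    rw [pow_zero, pow_one, ← hq, FiniteField.pow_card, sub_self]
  -- per-term computation
  have key : ∀ k ∈ Finset.range (e + 1),
      phiAct t (X 1 ^ 2 ^ k * (X 0 + X 2) ^ (2 ^ e - 2 ^ k) : MvPolynomial (Fin 3) K) =
        C (s ^ 2 ^ k) * (X 0 + X 2) ^ 2 ^ e +
          X 1 ^ 2 ^ k * (X 0 + X 2) ^ (2 ^ e - 2 ^ k) := by
    intro k hk
    have hke : 2 ^ k ≤ 2 ^ e :=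
      Nat.pow_le_pow_right (by norm_num) (Nat.lt_succ_iff.mp (Finset.mem_range.mp hk))
    rw [map_mul, map_pow, map_pow, hb, hS, add_pow_char_pow, mul_pow, ← map_pow,
      add_mul, mul_assoc, ← pow_add, Nat.add_sub_cancel' hke]
  rw [map_sum, Finset.sum_congr rfl key, Finset.sum_add_distrib, ← Finset.sum_mul,
    ← map_sum, hsum, map_zero, zero_mul, zero_add]
end

section
/- Let K = F_q with q = 2^{e+1} and T = K[a, b, d]. The polynomials a + d, ad − b², and f₃ = Σ_{k=0}^{e} b^{2^k}(a+d)^{2^e − 2^k} form a homogeneous system of parameters for T: their common zero locus over the algebraic closure is the origin. In fact, the ideal (a+d, ad−b², f₃) equals the ideal (a+d, ad−b², b^{2^e}), whose radical is (a, b, d). -/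
open MvPolynomial

lemma key_split {R : Type*} [CommRing R] (b s : R) (e : ℕ) :
    ∑ k ∈ Finset.range (e + 1), b ^ (2 ^ k) * s ^ (2 ^ e - 2 ^ k)
      = b ^ (2 ^ e) + s * ∑ k ∈ Finset.range e, b ^ (2 ^ k) * s ^ (2 ^ e - 2 ^ k - 1) := by
  rw [Finset.sum_range_succ, Nat.sub_self, pow_zero, mul_one, Finset.mul_sum, add_comm]
  congr 1
  refine Finset.sum_congr rfl fun k hk => ?_
  have hk' : 2 ^ k < 2 ^ e := Nat.pow_lt_pow_right one_lt_two (Finset.mem_range.mp hk)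
  obtain ⟨m, hm⟩ : ∃ m, 2 ^ e - 2 ^ k = m + 1 :=
    ⟨2 ^ e - 2 ^ k - 1, by omega⟩
  rw [hm]
  simp only [Nat.add_sub_cancel, pow_succ]
  ring

/-- The ideal generated by all the variables is the set of polynomials vanishing at 0;
in particular it is prime. -/
lemma span_X_fin3_prime (K : Type*) [Field K] :
    (Ideal.span {(X 0 : MvPolynomial (Fin 3) K), X 1, X 2}).IsPrime := by
  have hset : ({(X 0 : MvPolynomial (Fin 3) K), X 1, X 2} : Set (MvPolynomial (Fin 3) K))
      = MvPolynomial.X '' (Set.univ : Set (Fin 3)) := by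
    ext p
    simp only [Set.image_univ, Set.mem_range, Set.mem_insert_iff, Set.mem_singleton_iff]
    constructor
    · rintro (h | h | h) <;> exact ⟨_, h.symm⟩
    · rintro ⟨i, rfl⟩
      fin_cases i <;> simp
  have hker : Ideal.span {(X 0 : MvPolynomial (Fin 3) K), X 1, X 2}
      = RingHom.ker (constantCoeff : MvPolynomial (Fin 3) K →+* K) := by
    ext p
    rw [hset, mem_ideal_span_X_image, RingHom.mem_ker]
    constructor
    · intro h
      rw [constantCoeff_eq, coeff]
      by_contra hc
      obtain ⟨i, -, hi⟩ := h 0 (Finsupp.mem_support_iff.mpr hc)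
      simp at hi
    · intro h m hm
      by_contra hc
      push_neg at hc
      have hm0 : m = 0 := Finsupp.ext fun i => hc i (Set.mem_univ i)
      rw [hm0] at hm
      rw [constantCoeff_eq] at h
      exact (Finsupp.mem_support_iff.mp hm) h
  rw [hker]
  exact RingHom.ker_isPrime _

/-- For `K = F_q` with `q = 2^(e+1)` and `T = K[a, b, d]` (with `a = X 0`,
`b = X 1`, `d = X 2`), the polynomials `a + d`, `ad - b²` and
`f₃ = Σ_{k=0}^{e} b^(2^k)(a + d)^(2^e - 2^k)` form a homogeneous system of
parameters: their only common zero over the algebraic closure is the origin.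
In fact `(a + d, ad - b², f₃) = (a + d, ad - b², b^(2^e))`, whose radical is
`(a, b, d)`. -/
theorem symmetric_invariants_hsop_char_two (K : Type*) [Field K] [Fintype K]
    (e : ℕ) (hq : Fintype.card K = 2 ^ (e + 1)) :
    (∀ v : Fin 3 → AlgebraicClosure K,
      aeval v (X 0 + X 2 : MvPolynomial (Fin 3) K) = 0 →
      aeval v (X 0 * X 2 - X 1 ^ 2 : MvPolynomial (Fin 3) K) = 0 →
      aeval v (∑ k ∈ Finset.range (e + 1),
          X 1 ^ (2 ^ k) * (X 0 + X 2) ^ (2 ^ e - 2 ^ k) : MvPolynomial (Fin 3) K) = 0 →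
      v = 0) ∧
    Ideal.span {(X 0 + X 2 : MvPolynomial (Fin 3) K), X 0 * X 2 - X 1 ^ 2,
        ∑ k ∈ Finset.range (e + 1), X 1 ^ (2 ^ k) * (X 0 + X 2) ^ (2 ^ e - 2 ^ k)} =
      Ideal.span {(X 0 + X 2 : MvPolynomial (Fin 3) K), X 0 * X 2 - X 1 ^ 2,
        X 1 ^ (2 ^ e)} ∧
    (Ideal.span {(X 0 + X 2 : MvPolynomial (Fin 3) K), X 0 * X 2 - X 1 ^ 2,
        ∑ k ∈ Finset.range (e + 1), X 1 ^ (2 ^ k) * (X 0 + X 2) ^ (2 ^ e - 2 ^ k)}).radical =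
      Ideal.span {(X 0 : MvPolynomial (Fin 3) K), X 1, X 2} := by
  have hf : (∑ k ∈ Finset.range (e + 1),
        X 1 ^ (2 ^ k) * (X 0 + X 2) ^ (2 ^ e - 2 ^ k) : MvPolynomial (Fin 3) K)
      = X 1 ^ (2 ^ e) + (X 0 + X 2) *
        ∑ k ∈ Finset.range e, X 1 ^ (2 ^ k) * (X 0 + X 2) ^ (2 ^ e - 2 ^ k - 1) :=
    key_split _ _ e
  set g : MvPolynomial (Fin 3) K :=
    ∑ k ∈ Finset.range e, X 1 ^ (2 ^ k) * (X 0 + X 2) ^ (2 ^ e - 2 ^ k - 1) with hg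
  have hspan : Ideal.span {(X 0 + X 2 : MvPolynomial (Fin 3) K), X 0 * X 2 - X 1 ^ 2,
        ∑ k ∈ Finset.range (e + 1), X 1 ^ (2 ^ k) * (X 0 + X 2) ^ (2 ^ e - 2 ^ k)} =
      Ideal.span {(X 0 + X 2 : MvPolynomial (Fin 3) K), X 0 * X 2 - X 1 ^ 2,
        X 1 ^ (2 ^ e)} := by
    refine le_antisymm (Ideal.span_le.mpr ?_) (Ideal.span_le.mpr ?_)
    · rintro x (rfl | rfl | rfl)
      · exact Ideal.subset_span (by simp)
      · exact Ideal.subset_span (by simp)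
      · rw [hf]
        exact add_mem (Ideal.subset_span (by simp))
          (Ideal.mul_mem_right g _ (Ideal.subset_span (by simp)))
    · rintro x (rfl | rfl | rfl)
      · exact Ideal.subset_span (by simp)
      · exact Ideal.subset_span (by simp)
      · have hb : (X 1 ^ (2 ^ e) : MvPolynomial (Fin 3) K)
            = (∑ k ∈ Finset.range (e + 1),
                X 1 ^ (2 ^ k) * (X 0 + X 2) ^ (2 ^ e - 2 ^ k)) - (X 0 + X 2) * g := by
          rw [hf]; ring
        rw [hb]
        exact sub_mem (Ideal.subset_span (by simp))
          (Ideal.mul_mem_right g _ (Ideal.subset_span (by simp)))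
  refine ⟨?_, hspan, ?_⟩
  · intro v h1 h2 h3
    rw [hf, map_add, map_mul, h1, zero_mul, add_zero, map_pow, aeval_X] at h3
    have hv1 : v 1 = 0 := pow_eq_zero_iff (pow_ne_zero e two_ne_zero) |>.mp h3
    simp only [map_add, map_sub, map_mul, map_pow, aeval_X] at h1 h2
    have hv2 : v 2 = -v 0 := by linear_combination h1
    have hv0 : v 0 = 0 := by
      have hsq : v 0 ^ 2 = 0 := by linear_combination v 0 * h1 - h2 - v 1 * hv1
      exact pow_eq_zero_iff two_ne_zero |>.mp hsq
    funext i
    fin_cases i <;> simp [hv0, hv1, hv2]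
  · rw [hspan]
    refine le_antisymm ?_ ?_
    · rw [← (span_X_fin3_prime K).radical]
      apply Ideal.radical_mono
      rw [Ideal.span_le]
      rintro x (rfl | rfl | rfl)
      · exact add_mem (Ideal.subset_span (by simp)) (Ideal.subset_span (by simp))
      · exact sub_mem
          (Ideal.mul_mem_right _ _ (Ideal.subset_span (by simp)))
          (Ideal.pow_mem_of_mem _ (Ideal.subset_span (by simp)) 2 two_pos)
      · exact Ideal.pow_mem_of_mem _ (Ideal.subset_span (by simp)) _ (by positivity)
    · rw [Ideal.span_le]
      set I : Ideal (MvPolynomial (Fin 3) K) :=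
        Ideal.span {(X 0 + X 2 : MvPolynomial (Fin 3) K), X 0 * X 2 - X 1 ^ 2,
          X 1 ^ (2 ^ e)} with hI
      have hs : (X 0 + X 2 : MvPolynomial (Fin 3) K) ∈ I.radical :=
        Ideal.le_radical (Ideal.subset_span (by simp))
      have hp2 : (X 0 * X 2 - X 1 ^ 2 : MvPolynomial (Fin 3) K) ∈ I.radical :=
        Ideal.le_radical (Ideal.subset_span (by simp))
      have hb : (X 1 : MvPolynomial (Fin 3) K) ∈ I.radical :=
        Ideal.mem_radical_of_pow_mem (m := 2 ^ e)
          (Ideal.le_radical (Ideal.subset_span (by simp)))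
      have had : (X 0 * X 2 : MvPolynomial (Fin 3) K) ∈ I.radical := by
        have h : (X 0 * X 2 : MvPolynomial (Fin 3) K)
            = (X 0 * X 2 - X 1 ^ 2) + X 1 ^ 2 := by ring
        rw [h]
        exact add_mem hp2 (Ideal.pow_mem_of_mem _ hb 2 two_pos)
      have hx0 : (X 0 : MvPolynomial (Fin 3) K) ∈ I.radical := by
        apply Ideal.mem_radical_of_pow_mem (m := 2)
        have h : (X 0 ^ 2 : MvPolynomial (Fin 3) K)
            = X 0 * (X 0 + X 2) - X 0 * X 2 := by ring
        rw [h]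
        exact sub_mem (Ideal.mul_mem_left _ _ hs) had
      have hx2 : (X 2 : MvPolynomial (Fin 3) K) ∈ I.radical := by
        have h : (X 2 : MvPolynomial (Fin 3) K) = (X 0 + X 2) - X 0 := by ring
        rw [h]
        exact sub_mem hs hx0
      rintro x (rfl | rfl | rfl)
      · exact hx0
      · exact hb
      · exact hx2
end

section
/- Let K = F_q with q odd and G = GL₂(K) act on S = K[a,b,c,d] by conjugation. Let τ_ad be the K-algebra automorphism of S swapping a and d and fixing b and c. Then h := Jac(f₁,f₂,f₃,f₄), the Jacobian determinant of f₁ = a+d, f₂ = ad−bc, f₃ = P¹(f₂), f₄ = ∏_{A∈K,B∈K×}(Aa+Bb−(g(A)/B)c+(τ−A)d) with respect to (a,b,c,d), satisfies τ_ad(h) = −h. In particular h² is τ_ad-invariant and, since q is odd, h is not τ_ad-invariant unless h = 0. -/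
open MvPolynomial

/-- The primary invariants `f₁ = a + d`, `f₂ = ad - bc`, `f₃ = P¹(f₂)` and
`f₄ = ∏_{A ∈ K, B ∈ K×} (Aa + Bb - (g(A)/B)c + (τ - A)d)` of the conjugation
action, where `a = X 0`, `b = X 1`, `c = X 2`, `d = X 3` and `g(x) = x² - τx + δ`. -/
noncomputable def primaryInv (K : Type*) [Field K] [Fintype K] [DecidableEq K] (τ δ : K) :
    Fin 4 → MvPolynomial (Fin 4) K :=
  ![X 0 + X 3,
    X 0 * X 3 - X 1 * X 2,
    X 0 ^ Fintype.card K * X 3 + X 0 * X 3 ^ Fintype.card K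
      - X 1 ^ Fintype.card K * X 2 - X 1 * X 2 ^ Fintype.card K,
    ∏ A : K, ∏ B ∈ Finset.univ.erase (0 : K),
      (C A * X 0 + C B * X 1 - C ((A ^ 2 - τ * A + δ) / B) * X 2 + C (τ - A) * X 3)]

/-- The Jacobian determinant `h = Jac(f₁, f₂, f₃, f₄)` of the primary invariants
with respect to the variables `(a, b, c, d)`. -/
noncomputable def jacInv (K : Type*) [Field K] [Fintype K] [DecidableEq K] (τ δ : K) :
    MvPolynomial (Fin 4) K :=
  Matrix.det (Matrix.of fun i j : Fin 4 => pderiv j (primaryInv K τ δ i))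

lemma swap03 : (Equiv.swap (0 : Fin 4) 3) 0 = 3 := by decide
lemma swap30 : (Equiv.swap (0 : Fin 4) 3) 3 = 0 := by decide
lemma swap1 : (Equiv.swap (0 : Fin 4) 3) 1 = 1 := by decide
lemma swap2 : (Equiv.swap (0 : Fin 4) 3) 2 = 2 := by decide

lemma primaryInv_swap (K : Type*) [Field K] [Fintype K] [DecidableEq K] (τ δ : K) (i : Fin 4) :
    rename (Equiv.swap (0 : Fin 4) 3) (primaryInv K τ δ i) = primaryInv K τ δ i := by
  fin_cases i
  · show rename _ (X 0 + X 3 : MvPolynomial (Fin 4) K) = _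
    simp [primaryInv, swap03, swap30]; ring
  · show rename _ (X 0 * X 3 - X 1 * X 2 : MvPolynomial (Fin 4) K) = _
    simp [primaryInv, swap03, swap30, swap1, swap2]; ring
  · show rename _ (X 0 ^ Fintype.card K * X 3 + X 0 * X 3 ^ Fintype.card K
      - X 1 ^ Fintype.card K * X 2 - X 1 * X 2 ^ Fintype.card K : MvPolynomial (Fin 4) K) = _
    simp [primaryInv, swap03, swap30, swap1, swap2]; ring
  · show rename _ (∏ A : K, ∏ B ∈ Finset.univ.erase (0 : K),
      (C A * X 0 + C B * X 1 - C ((A ^ 2 - τ * A + δ) / B) * X 2 + C (τ - A) * X 3)) = _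
    show _ = (∏ A : K, ∏ B ∈ Finset.univ.erase (0 : K),
      (C A * X 0 + C B * X 1 - C ((A ^ 2 - τ * A + δ) / B) * X 2 + C (τ - A) * X 3))
    rw [map_prod, ← Equiv.prod_comp (Equiv.subLeft τ)]
    refine Finset.prod_congr rfl fun A _ => ?_
    rw [map_prod]
    refine Finset.prod_congr rfl fun B hB => ?_
    simp only [map_add, map_sub, map_mul, rename_X, rename_C, swap03, swap30, swap1, swap2,
      Equiv.subLeft_apply]
    have : (τ - A) ^ 2 - τ * (τ - A) + δ = A ^ 2 - τ * A + δ := by ring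
    rw [this]; ring

lemma jacInv_swap (K : Type*) [Field K] [Fintype K] [DecidableEq K] (τ δ : K) :
    rename (Equiv.swap (0 : Fin 4) 3) (jacInv K τ δ) = - jacInv K τ δ := by
  have hswap : Function.Injective (Equiv.swap (0 : Fin 4) 3) := (Equiv.swap _ _).injective
  rw [jacInv, AlgHom.map_det, AlgHom.mapMatrix_apply]
  have : (Matrix.of fun i j : Fin 4 => pderiv j (primaryInv K τ δ i)).map
      ⇑(rename (Equiv.swap (0 : Fin 4) 3) : MvPolynomial (Fin 4) K →ₐ[K] MvPolynomial (Fin 4) K)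
      = (Matrix.of fun i j : Fin 4 => pderiv j (primaryInv K τ δ i)).submatrix id
          (Equiv.swap (0 : Fin 4) 3) := by
    ext i j
    simp only [Matrix.map_apply, Matrix.of_apply, Matrix.submatrix_apply, id]
    rw [← pderiv_rename hswap, primaryInv_swap]
  rw [this, Matrix.det_permute', Equiv.Perm.sign_swap (by decide)]
  simp [jacInv]

/-- For `q` odd and `g(x) = x² - τx + δ` irreducible, the variable swap
`τ_ad : a ↔ d` (fixing `b`, `c`) sends the Jacobian `h` of the primary invariants
to `-h`; hence `h²` is `τ_ad`-invariant while `h` itself is not `τ_ad`-invariant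
unless `h = 0`. -/
theorem jacobian_antiinvariant (K : Type*) [Field K] [Fintype K] [DecidableEq K]
    (hodd : Odd (Fintype.card K)) (τ δ : K)
    (hirr : Irreducible (Polynomial.X ^ 2 - Polynomial.C τ * Polynomial.X + Polynomial.C δ)) :
    rename (Equiv.swap (0 : Fin 4) 3) (jacInv K τ δ) = - jacInv K τ δ ∧
    rename (Equiv.swap (0 : Fin 4) 3) (jacInv K τ δ ^ 2) = jacInv K τ δ ^ 2 ∧
    (jacInv K τ δ ≠ 0 →
      rename (Equiv.swap (0 : Fin 4) 3) (jacInv K τ δ) ≠ jacInv K τ δ) := by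
  have key := jacInv_swap K τ δ
  refine ⟨key, by rw [map_pow, key]; ring, ?_⟩
  intro hne heq
  rw [key] at heq
  have h2 : ringChar K ≠ 2 := by
    intro hc
    have := FiniteField.even_card_of_char_two hc
    rw [Nat.odd_iff] at hodd
    omega
  have h2' : (2 : K) ≠ 0 := Ring.two_ne_zero h2
  have hmul : (C (2 : K) : MvPolynomial (Fin 4) K) * jacInv K τ δ = 0 := by
    rw [map_ofNat]
    linear_combination -heq
  rcases mul_eq_zero.mp hmul with h | h
  · exact h2' (by simpa using h)
  · exact hne h
end
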